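/- Let τ, V, F, b_1,...,b_d be as in the coordinate expansion setup, and let (w_n)_{n∈ℤ} be a sequence in F_p((t))^d with w_n → 0 as n → ∞. Then for each z = Σ_{(j,k)} n_{j,k} τ^j(b_k) ∈ F_p((t))^d, the sum φ(z) := Σ_{(j,k)} n_{j,k} w_{k + jd} converges in F_p((t))^d, and the map φ so defined is a continuous group endomorphism of F_p((t))^d. -/

import Mathlib

/-! Expansions are unique, and more precisely an element of `τ^m V` has no nonzero coefficient
below level `m`: at the lowest nonzero level `j < m` the combination `Σ_k n_{j,k} b_k` would lie in
the closed subgroup `τ V`, contradicting `F ∩ τ V = 0`. Uniqueness makes the coefficients, hence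
`φ`, additive. The series for `φ(z)` converges because `F_p((t))^d` is complete and
nonarchimedean and its terms tend to zero. Continuity at `0` holds because on the open subgroup
`τ^m V` only the `w_n` with `n > m` occur. -/

/-- Coordinatewise multiplication by `t^j` (`j ∈ ℤ`) on `F_p((t))^d`, i.e. `τ^j`. -/
noncomputable def tauZ (p d : ℕ) (j : ℤ) (z : Fin d → LaurentSeries (ZMod p)) :
    Fin d → LaurentSeries (ZMod p) :=
  fun r => HahnSeries.single j (1 : ZMod p) * z r

open Filter Topology

instance Valued.nonarchimedeanAddGroup {R Γ₀ : Type*} [Ring R]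
    [LinearOrderedCommGroupWithZero Γ₀] [Valued R Γ₀] : NonarchimedeanAddGroup R where
  is_nonarchimedean U hU := by
    obtain ⟨γ, hγ⟩ := Valued.mem_nhds_zero.1 hU
    exact ⟨⟨Valued.v.restrict.ltAddSubgroup γ, Valued.isOpen_ball R γ.1⟩, hγ⟩

instance Pi.nonarchimedeanAddGroup {ι : Type*} [Finite ι] {G : ι → Type*}
    [∀ i, AddGroup (G i)] [∀ i, TopologicalSpace (G i)] [∀ i, NonarchimedeanAddGroup (G i)] :
    NonarchimedeanAddGroup (∀ i, G i) where
  is_nonarchimedean U hU := by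
    rw [nhds_pi, Filter.mem_pi] at hU
    obtain ⟨I, -, t, ht, htU⟩ := hU
    choose W hW using fun i => NonarchimedeanAddGroup.is_nonarchimedean (t i) (ht i)
    refine ⟨⟨AddSubgroup.pi Set.univ fun i => (W i : AddSubgroup (G i)),
      isOpen_set_pi Set.finite_univ fun i _ => (W i).isOpen⟩, fun x hx => htU fun i _ => hW i ?_⟩
    exact hx i (Set.mem_univ i)

theorem NonarchimedeanAddGroup.tendsto_zmod_smul_zero {ι G : Type*} {n : ℕ} [AddCommGroup G]
    [Module (ZMod n) G] [TopologicalSpace G] [NonarchimedeanAddGroup G] {l : Filter ι}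
    {f : ι → G} (hf : Tendsto f l (𝓝 0)) (c : ι → ZMod n) :
    Tendsto (fun i => c i • f i) l (𝓝 0) := by
  refine fun U hU => ?_
  obtain ⟨W, hWU⟩ := is_nonarchimedean U hU
  have hfW : ∀ᶠ i in l, f i ∈ W := hf W.mem_nhds_zero
  exact hfW.mono fun i hi => hWU (ZMod.smul_mem hi (c i))

theorem hasSum_mem_of_isClosed {ι G : Type*} [AddCommGroup G] [TopologicalSpace G]
    {H : AddSubgroup G} (hH : IsClosed (H : Set G)) {f : ι → G} {a : G} (hf : HasSum f a)
    (hfH : ∀ i, f i ∈ H) : a ∈ H :=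
  hH.mem_of_tendsto hf (Eventually.of_forall fun _ => H.sum_mem fun i _ => hfH i)

namespace TauExpansion

variable {p d : ℕ}

local notation "X" => Fin d → LaurentSeries (ZMod p)

theorem tauZ_add (j : ℤ) (x y : X) : tauZ p d j (x + y) = tauZ p d j x + tauZ p d j y := by
  funext r
  exact mul_add _ _ _

theorem tauZ_tauZ (i j : ℤ) (z : X) : tauZ p d i (tauZ p d j z) = tauZ p d (i + j) z := by
  funext r
  simp only [tauZ, ← mul_assoc, HahnSeries.single_mul_single, one_mul]

theorem tauZ_zero (z : X) : tauZ p d 0 z = z := by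
  funext r
  simp [tauZ, HahnSeries.single_zero_one]

noncomputable def tauZHom (j : ℤ) : X →+ X := AddMonoidHom.mk' (tauZ p d j) (tauZ_add j)

theorem tauZHom_apply (j : ℤ) (z : X) : tauZHom j z = tauZ p d j z := rfl

/-- `τ^n V`, written as a preimage so that it is visibly an open (closed) subgroup when `V` is. -/
noncomputable def tauZSubgroup (V : AddSubgroup X) (n : ℤ) : AddSubgroup X :=
  V.comap (tauZHom (-n))

theorem mem_tauZSubgroup {V : AddSubgroup X} {n : ℤ} {x : X} :
    x ∈ tauZSubgroup V n ↔ tauZ p d (-n) x ∈ V := Iff.rfl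

theorem tauZ_mem_tauZSubgroup {V : AddSubgroup X} {v : X} (hv : v ∈ V) (n : ℤ) :
    tauZ p d n v ∈ tauZSubgroup V n := by
  rwa [mem_tauZSubgroup, tauZ_tauZ, neg_add_cancel, tauZ_zero]

theorem tauZSubgroup_antitone {V : AddSubgroup X} (hτV : ∀ v ∈ V, tauZ p d 1 v ∈ V) :
    Antitone (tauZSubgroup V) := by
  refine antitone_int_of_succ_le fun n x hx => ?_
  rw [mem_tauZSubgroup] at hx ⊢
  simpa [tauZ_tauZ] using hτV _ hx

variable [Fact p.Prime]

theorem continuous_tauZ (j : ℤ) : Continuous (tauZ p d j) :=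
  continuous_pi fun r => continuous_const.mul (continuous_apply r)

theorem isClosed_tauZSubgroup {V : AddSubgroup X} (hV : IsClosed (V : Set X)) (n : ℤ) :
    IsClosed (tauZSubgroup V n : Set X) :=
  hV.preimage (continuous_tauZ (-n))

theorem isOpen_tauZSubgroup {V : AddSubgroup X} (hV : IsOpen (V : Set X)) (n : ℤ) :
    IsOpen (tauZSubgroup V n : Set X) :=
  hV.preimage (continuous_tauZ (-n))

theorem expansion_coeff_eq_zero_of_mem {V : AddSubgroup X} (hV : IsClosed (V : Set X))
    (hτV : ∀ v ∈ V, tauZ p d 1 v ∈ V) {b : Fin d → X} (hbV : ∀ k, b k ∈ V)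
    (hdir : ∀ (c : Fin d → ZMod p) (w : X), w ∈ V → (∑ k, c k • b k) = tauZ p d 1 w → c = 0)
    {c : ℤ × Fin d → ZMod p} {z : X} {j : ℤ}
    (hsum : HasSum (fun jk : ℤ × Fin d => c jk • tauZ p d jk.1 (b jk.2)) z)
    (hc : ∀ jk : ℤ × Fin d, jk.1 < j → c jk = 0) (hz : z ∈ tauZSubgroup V (j + 1)) (k : Fin d) :
    c (j, k) = 0 := by
  set W := tauZSubgroup V (j + 1)
  set s : Finset (ℤ × Fin d) := {j} ×ˢ Finset.univ
  have hslice : ∑ jk ∈ s, c jk • tauZ p d jk.1 (b jk.2) = tauZ p d j (∑ k, c (j, k) • b k) := by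
    simp [s, ← tauZHom_apply, map_sum, ZMod.map_smul]
  have hrest : z - ∑ jk ∈ s, c jk • tauZ p d jk.1 (b jk.2) ∈ W := by
    refine hasSum_mem_of_isClosed (isClosed_tauZSubgroup hV _)
      ((Finset.hasSum_compl_iff s).2 (by rwa [sub_add_cancel])) fun ⟨jk, hjk⟩ => ?_
    have hj : jk.1 ≠ j := fun h =>
      hjk (Finset.mem_product.2 ⟨Finset.mem_singleton.2 h, Finset.mem_univ _⟩)
    rcases hj.lt_or_gt with hlt | hgt
    · simp [hc jk hlt]
    · exact ZMod.smul_mem (tauZSubgroup_antitone hτV hgt (tauZ_mem_tauZSubgroup (hbV _) _)) _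
  have hA : tauZ p d j (∑ k, c (j, k) • b k) ∈ W := by
    simpa [hslice] using W.sub_mem hz hrest
  rw [mem_tauZSubgroup, tauZ_tauZ, show -(j + 1) + j = -1 by ring] at hA
  exact congrFun (hdir _ _ hA (by rw [tauZ_tauZ, add_neg_cancel, tauZ_zero])) k

theorem expansion_coeff_eq_zero_of_mem_tauZSubgroup {V : AddSubgroup X}
    (hV : IsClosed (V : Set X)) (hτV : ∀ v ∈ V, tauZ p d 1 v ∈ V) {b : Fin d → X}
    (hbV : ∀ k, b k ∈ V)
    (hdir : ∀ (c : Fin d → ZMod p) (w : X), w ∈ V → (∑ k, c k • b k) = tauZ p d 1 w → c = 0)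
    {c : ℤ × Fin d → ZMod p} {z : X} (hvan : ∃ j₀ : ℤ, ∀ jk : ℤ × Fin d, jk.1 < j₀ → c jk = 0)
    (hsum : HasSum (fun jk : ℤ × Fin d => c jk • tauZ p d jk.1 (b jk.2)) z)
    {m : ℤ} (hz : z ∈ tauZSubgroup V m) : ∀ jk : ℤ × Fin d, jk.1 < m → c jk = 0 := by
  obtain ⟨j₀, hj₀⟩ := hvan
  suffices ∀ n, min j₀ m ≤ n → n ≤ m → ∀ jk : ℤ × Fin d, jk.1 < n → c jk = 0 from
    this m (min_le_right _ _) le_rfl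
  intro n hn
  induction n, hn using Int.leInduction with
  | base => exact fun _ jk hjk => hj₀ jk (hjk.trans_le (min_le_left _ _))
  | succ n _ ih =>
    intro hnm jk hjk
    have hbelow := ih (by omega)
    rcases (Int.lt_add_one_iff.1 hjk).lt_or_eq with hlt | rfl
    · exact hbelow jk hlt
    · exact expansion_coeff_eq_zero_of_mem hV hτV hbV hdir hsum hbelow
        (tauZSubgroup_antitone hτV hnm hz) jk.2

theorem expansion_coeff_eq_zero_of_hasSum_zero {V : AddSubgroup X} (hV : IsClosed (V : Set X))
    (hτV : ∀ v ∈ V, tauZ p d 1 v ∈ V) {b : Fin d → X} (hbV : ∀ k, b k ∈ V)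
    (hdir : ∀ (c : Fin d → ZMod p) (w : X), w ∈ V → (∑ k, c k • b k) = tauZ p d 1 w → c = 0)
    {c : ℤ × Fin d → ZMod p} (hvan : ∃ j₀ : ℤ, ∀ jk : ℤ × Fin d, jk.1 < j₀ → c jk = 0)
    (hsum : HasSum (fun jk : ℤ × Fin d => c jk • tauZ p d jk.1 (b jk.2)) 0) : c = 0 :=
  funext fun jk => expansion_coeff_eq_zero_of_mem_tauZSubgroup hV hτV hbV hdir hvan hsum
    (tauZSubgroup V (jk.1 + 1)).zero_mem jk (lt_add_one _)

/-- The paper's index `k + j d`, with `k ∈ {1, …, d}` stored as `k - 1 : Fin d`. -/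
def flatIndex (d : ℕ) (jk : ℤ × Fin d) : ℤ := ((jk.2 : ℕ) : ℤ) + 1 + jk.1 * d

theorem lt_flatIndex {jk : ℤ × Fin d} (hj : 0 ≤ jk.1) : jk.1 < flatIndex d jk := by
  have hd : (1 : ℤ) ≤ d := by exact_mod_cast jk.2.pos
  have hk : (0 : ℤ) ≤ ((jk.2 : ℕ) : ℤ) := Int.natCast_nonneg _
  unfold flatIndex
  nlinarith

theorem tendsto_flatIndex (j₀ : ℤ) :
    Tendsto (flatIndex d) (cofinite ⊓ 𝓟 {jk | j₀ ≤ jk.1}) atTop := by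
  refine tendsto_atTop.2 fun M => mem_inf_principal.2 (mem_cofinite.2 ?_)
  refine ((Set.finite_Ico j₀ (max M 0)).prod Set.finite_univ).subset fun jk hjk => ?_
  simp only [Set.mem_compl_iff, Set.mem_ofPred_eq, Classical.not_imp, not_le] at hjk
  refine ⟨⟨hjk.1, ?_⟩, Set.mem_univ _⟩
  rcases lt_or_ge jk.1 0 with hneg | hnonneg
  · exact hneg.trans_le (le_max_right _ _)
  · exact ((lt_flatIndex hnonneg).trans hjk.2).trans_le (le_max_left _ _)

theorem summable_coeff_smul_flatIndex {c : ℤ × Fin d → ZMod p}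
    (hc : ∃ j₀ : ℤ, ∀ jk : ℤ × Fin d, jk.1 < j₀ → c jk = 0) {w : ℤ → X}
    (hw : Tendsto w atTop (𝓝 0)) : Summable fun jk => c jk • w (flatIndex d jk) := by
  obtain ⟨j₀, hj₀⟩ := hc
  refine NonarchimedeanAddGroup.summable_of_tendsto_cofinite_zero ?_
  rw [← tendsto_inf_principal_nhds_iff_of_forall_eq (s := {jk | j₀ ≤ jk.1})
    fun jk hjk => by simp [hj₀ jk (not_le.1 hjk)]]
  exact NonarchimedeanAddGroup.tendsto_zmod_smul_zero (hw.comp (tendsto_flatIndex j₀)) c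

noncomputable def sumAlongExpansion (N : X → ℤ × Fin d → ZMod p) (w : ℤ → X) (z : X) : X :=
  ∑' jk, N z jk • w (flatIndex d jk)

theorem expansion_coeff_add {V : AddSubgroup X} (hV : IsClosed (V : Set X))
    (hτV : ∀ v ∈ V, tauZ p d 1 v ∈ V) {b : Fin d → X} (hbV : ∀ k, b k ∈ V)
    (hdir : ∀ (c : Fin d → ZMod p) (w : X), w ∈ V → (∑ k, c k • b k) = tauZ p d 1 w → c = 0)
    {N : X → ℤ × Fin d → ZMod p}
    (hNvanish : ∀ z, ∃ j₀ : ℤ, ∀ jk : ℤ × Fin d, jk.1 < j₀ → N z jk = 0)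
    (hNsum : ∀ z, HasSum (fun jk : ℤ × Fin d => N z jk • tauZ p d jk.1 (b jk.2)) z) (z z' : X) :
    N (z + z') = N z + N z' := by
  refine sub_eq_zero.1 (expansion_coeff_eq_zero_of_hasSum_zero hV hτV hbV hdir ?_ ?_)
  · obtain ⟨j₁, hj₁⟩ := hNvanish (z + z')
    obtain ⟨j₂, hj₂⟩ := hNvanish z
    obtain ⟨j₃, hj₃⟩ := hNvanish z'
    refine ⟨min j₁ (min j₂ j₃), fun jk hjk => ?_⟩
    simp [hj₁ jk (by omega), hj₂ jk (by omega), hj₃ jk (by omega)]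
  · simpa [sub_smul, add_smul] using (hNsum (z + z')).sub ((hNsum z).add (hNsum z'))

theorem sumAlongExpansion_add {V : AddSubgroup X} (hV : IsClosed (V : Set X))
    (hτV : ∀ v ∈ V, tauZ p d 1 v ∈ V) {b : Fin d → X} (hbV : ∀ k, b k ∈ V)
    (hdir : ∀ (c : Fin d → ZMod p) (w : X), w ∈ V → (∑ k, c k • b k) = tauZ p d 1 w → c = 0)
    {N : X → ℤ × Fin d → ZMod p}
    (hNvanish : ∀ z, ∃ j₀ : ℤ, ∀ jk : ℤ × Fin d, jk.1 < j₀ → N z jk = 0)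
    (hNsum : ∀ z, HasSum (fun jk : ℤ × Fin d => N z jk • tauZ p d jk.1 (b jk.2)) z)
    {w : ℤ → X} (hw : Tendsto w atTop (𝓝 0)) (z z' : X) :
    sumAlongExpansion N w (z + z') = sumAlongExpansion N w z + sumAlongExpansion N w z' := by
  have hsum : ∀ z, HasSum (fun jk => N z jk • w (flatIndex d jk)) (sumAlongExpansion N w z) :=
    fun z => (summable_coeff_smul_flatIndex (hNvanish z) hw).hasSum
  refine (hsum (z + z')).unique ?_
  simpa [expansion_coeff_add hV hτV hbV hdir hNvanish hNsum, add_smul] using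
    (hsum z).add (hsum z')

theorem continuous_sumAlongExpansion {V : AddSubgroup X} (hV : IsOpen (V : Set X))
    (hτV : ∀ v ∈ V, tauZ p d 1 v ∈ V) {b : Fin d → X} (hbV : ∀ k, b k ∈ V)
    (hdir : ∀ (c : Fin d → ZMod p) (w : X), w ∈ V → (∑ k, c k • b k) = tauZ p d 1 w → c = 0)
    {N : X → ℤ × Fin d → ZMod p}
    (hNvanish : ∀ z, ∃ j₀ : ℤ, ∀ jk : ℤ × Fin d, jk.1 < j₀ → N z jk = 0)
    (hNsum : ∀ z, HasSum (fun jk : ℤ × Fin d => N z jk • tauZ p d jk.1 (b jk.2)) z)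
    {w : ℤ → X} (hw : Tendsto w atTop (𝓝 0)) : Continuous (sumAlongExpansion N w) := by
  have hV' := V.isClosed_of_isOpen hV
  let φ : X →+ X := AddMonoidHom.mk' (sumAlongExpansion N w)
    (sumAlongExpansion_add hV' hτV hbV hdir hNvanish hNsum hw)
  refine continuous_of_continuousAt_zero φ ?_
  rw [ContinuousAt, map_zero]
  intro U hU
  rw [mem_map]
  obtain ⟨W, hWU⟩ := NonarchimedeanAddGroup.is_nonarchimedean U hU
  obtain ⟨M, hM⟩ := eventually_atTop.1 (hw W.mem_nhds_zero)
  filter_upwards [(isOpen_tauZSubgroup hV (max M 0)).mem_nhds (zero_mem _)] with x hx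
  refine hWU (hasSum_mem_of_isClosed W.isClosed
    (summable_coeff_smul_flatIndex (hNvanish x) hw).hasSum fun jk => ?_)
  rcases lt_or_ge jk.1 (max M 0) with hlow | hhigh
  · rw [expansion_coeff_eq_zero_of_mem_tauZSubgroup hV' hτV hbV hdir (hNvanish x) (hNsum x) hx
      jk hlow, zero_smul]
    exact zero_mem _
  · refine ZMod.smul_mem (hM _ ?_) _
    have := lt_flatIndex ((le_max_right M 0).trans hhigh)
    omega

end TauExpansion

open TauExpansion in
theorem sum_along_expansion_endomorphism_general (p : ℕ) [Fact p.Prime] (d : ℕ)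
    (V : AddSubgroup (Fin d → LaurentSeries (ZMod p)))
    (hVo : IsOpen (V : Set (Fin d → LaurentSeries (ZMod p))))
    (hτV : ∀ v ∈ V, tauZ p d 1 v ∈ V)
    (b : Fin d → (Fin d → LaurentSeries (ZMod p)))
    (hbV : ∀ k, b k ∈ V)
    (hdir : ∀ (c : Fin d → ZMod p) (w : Fin d → LaurentSeries (ZMod p)), w ∈ V →
      (∑ k, c k • b k) = tauZ p d 1 w → c = 0)
    (N : (Fin d → LaurentSeries (ZMod p)) → (ℤ × Fin d → ZMod p))
    (hNvanish : ∀ z, ∃ j0 : ℤ, ∀ jk : ℤ × Fin d, jk.1 < j0 → N z jk = 0)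
    (hNsum : ∀ z, HasSum (fun jk : ℤ × Fin d => N z jk • tauZ p d jk.1 (b jk.2)) z)
    (w : ℤ → (Fin d → LaurentSeries (ZMod p)))
    (hw : Filter.Tendsto w Filter.atTop (nhds 0)) :
    ∃ φ : (Fin d → LaurentSeries (ZMod p)) → (Fin d → LaurentSeries (ZMod p)),
      Continuous φ ∧
      (∀ z z', φ (z + z') = φ z + φ z') ∧
      ∀ z, HasSum (fun jk : ℤ × Fin d =>
        N z jk • w (((jk.2 : ℕ) : ℤ) + 1 + jk.1 * (d : ℤ))) (φ z) :=
  ⟨sumAlongExpansion N w, continuous_sumAlongExpansion hVo hτV hbV hdir hNvanish hNsum hw,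
    sumAlongExpansion_add (V.isClosed_of_isOpen hVo) hτV hbV hdir hNvanish hNsum hw,
    fun z => (summable_coeff_smul_flatIndex (hNvanish z) hw).hasSum⟩

/-- With `V`, `b` as in the coordinate-expansion setup (unique expansions
`z = Σ_{j,k} n_{j,k}(z) τ^j(b_k)`), and `(w_n)_{n∈ℤ}` a sequence in `F_p((t))^d` with
`w_n → 0` as `n → ∞`: for each `z` the sum `φ(z) := Σ_{j,k} n_{j,k}(z) w_{k+jd}`
converges, and `φ` is a continuous additive endomorphism of `F_p((t))^d`. -/
theorem sum_along_expansion_endomorphism (p : ℕ) [Fact p.Prime] (d : ℕ) (hd : 0 < d)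
    (V : AddSubgroup (Fin d → LaurentSeries (ZMod p)))
    (hVc : IsCompact (V : Set (Fin d → LaurentSeries (ZMod p))))
    (hVo : IsOpen (V : Set (Fin d → LaurentSeries (ZMod p))))
    (hτV : ∀ v ∈ V, tauZ p d 1 v ∈ V)
    (b : Fin d → (Fin d → LaurentSeries (ZMod p)))
    (hbV : ∀ k, b k ∈ V)
    (hgen : ∀ v ∈ V, ∃ c : Fin d → ZMod p, ∃ w ∈ V,
      v = (∑ k, c k • b k) + tauZ p d 1 w)
    (hdir : ∀ (c : Fin d → ZMod p) (w : Fin d → LaurentSeries (ZMod p)), w ∈ V →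
      (∑ k, c k • b k) = tauZ p d 1 w → c = 0)
    (N : (Fin d → LaurentSeries (ZMod p)) → (ℤ × Fin d → ZMod p))
    (hNvanish : ∀ z, ∃ j0 : ℤ, ∀ jk : ℤ × Fin d, jk.1 < j0 → N z jk = 0)
    (hNsum : ∀ z, HasSum (fun jk : ℤ × Fin d => N z jk • tauZ p d jk.1 (b jk.2)) z)
    (w : ℤ → (Fin d → LaurentSeries (ZMod p)))
    (hw : Filter.Tendsto w Filter.atTop (nhds 0)) :
    ∃ φ : (Fin d → LaurentSeries (ZMod p)) → (Fin d → LaurentSeries (ZMod p)),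
      Continuous φ ∧
      (∀ z z', φ (z + z') = φ z + φ z') ∧
      ∀ z, HasSum (fun jk : ℤ × Fin d =>
        N z jk • w (((jk.2 : ℕ) : ℤ) + 1 + jk.1 * (d : ℤ))) (φ z) :=
  sum_along_expansion_endomorphism_general p d V hVo hτV b hbV hdir N hNvanish hNsum w hw
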